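/- Let Λ be a finite-dimensional algebra and M a Λ-module. The full subcategory of K^{[-1,0]}(proj Λ) consisting of M-semistable complexes is closed under extensions: if X ↣ Y ↠ Z is a conflation (i.e., part of a triangle in the derived category with all three objects 2-term complexes of projectives) and X and Z are M-semistable, then Y is M-semistable. -/

import Mathlib

/-!
Apply `Hom(-, M)` to the degreewise short exact sequences `0 → X⁻¹ → Y⁻¹ → Z⁻¹ → 0` and
`0 → X⁰ → Y⁰ → Z⁰ → 0`. Both split because `Z⁻¹` and `Z⁰` are projective, so the resulting
sequences of abelian groups are again short exact, and precomposition with the differentials is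
a morphism between them. Its outer components are the isomorphisms given by the semistability
of `X` and `Z`, so the five lemma makes the middle one an isomorphism.
-/

namespace LinearMap

theorem lcomp_comp {R S : Type*} [Semiring R] [Semiring S] {M₁ M₂ M₃ : Type*} (N : Type*)
    [AddCommMonoid M₁] [AddCommMonoid M₂] [AddCommMonoid M₃] [AddCommMonoid N]
    [Module R M₁] [Module R M₂] [Module R M₃] [Module R N] [Module S N] [SMulCommClass R S N]
    (f : M₁ →ₗ[R] M₂) (g : M₂ →ₗ[R] M₃) :
    lcomp S N (g ∘ₗ f) = lcomp S N f ∘ₗ lcomp S N g :=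
  rfl

end LinearMap

namespace Function.Exact

variable {R S : Type*} [Ring R] [CommRing S] {M₁ M₂ M₃ : Type*} (N : Type*)
  [AddCommGroup M₁] [AddCommGroup M₂] [AddCommGroup M₃] [AddCommGroup N]
  [Module R M₁] [Module R M₂] [Module R M₃] [Module R N] [Module S N] [SMulCommClass R S N]
  {f : M₁ →ₗ[R] M₂} {g : M₂ →ₗ[R] M₃}

theorem lcomp (h : Exact f g) (hg : Surjective g) :
    Exact (LinearMap.lcomp S N g) (LinearMap.lcomp S N f) := by
  intro φ
  refine ⟨fun hφ ↦ ?_, ?_⟩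
  · refine ⟨((LinearMap.range f).liftQ φ (LinearMap.range_le_ker_iff.mpr hφ)).comp
      (h.linearEquivOfSurjective hg).symm.toLinearMap, ?_⟩
    ext x
    simp
  · rintro ⟨ψ, rfl⟩
    rw [LinearMap.lcomp_apply', LinearMap.lcomp_apply', LinearMap.comp_assoc,
      h.linearMap_comp_eq_zero, LinearMap.comp_zero]

theorem surjective_lcomp [Module.Projective R M₃] (h : Exact f g) (hf : Injective f)
    (hg : Surjective g) : Surjective (LinearMap.lcomp S N f) := by
  obtain ⟨s, hs⟩ : ∃ s, g ∘ₗ s = .id :=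
    g.exists_rightInverse_of_surjective (LinearMap.range_eq_top.mpr hg)
  have split_iff := (h.split_tfae hf hg).out 0 1
  obtain ⟨r, hr⟩ := split_iff.mp ⟨s, hs⟩
  refine fun φ ↦ ⟨φ.comp r, ?_⟩
  rw [LinearMap.lcomp_apply', LinearMap.comp_assoc, hr, LinearMap.comp_id]

end Function.Exact

open LinearMap

/-- A conflation `X ↣ Y ↠ Z` in `K^{[-1,0]}(proj Λ)` is represented (Remark 2.2 of the paper,
after absorbing a contractible summand `P = P` into `Y`) by a degreewise short exact sequence
of 2-term complexes. -/
theorem stmt2 {Λ : Type*} [Ring Λ]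
    {M : Type*} [AddCommGroup M] [Module Λ M]
    {Xm X0 Ym Y0 Zm Z0 : Type*}
    [AddCommGroup Xm] [Module Λ Xm]
    [AddCommGroup X0] [Module Λ X0]
    [AddCommGroup Ym] [Module Λ Ym]
    [AddCommGroup Y0] [Module Λ Y0]
    [AddCommGroup Zm] [Module Λ Zm] [Module.Projective Λ Zm]
    [AddCommGroup Z0] [Module Λ Z0] [Module.Projective Λ Z0]
    (dx : Xm →ₗ[Λ] X0) (dy : Ym →ₗ[Λ] Y0) (dz : Zm →ₗ[Λ] Z0)
    -- the conflation `X ↣ Y ↠ Z`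
    (fm : Xm →ₗ[Λ] Ym) (f0 : X0 →ₗ[Λ] Y0) (gm : Ym →ₗ[Λ] Zm) (g0 : Y0 →ₗ[Λ] Z0)
    (hf : f0.comp dx = dy.comp fm) (hg : g0.comp dy = dz.comp gm)
    (hmono_m : Function.Injective fm) (hexact_m : Function.Exact fm gm)
    (hepi_m : Function.Surjective gm)
    (hmono_0 : Function.Injective f0) (hexact_0 : Function.Exact f0 g0)
    (hepi_0 : Function.Surjective g0)
    -- `X` and `Z` are `M`-semistable
    (hX : Function.Bijective fun φ : X0 →ₗ[Λ] M => φ.comp dx)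
    (hZ : Function.Bijective fun φ : Z0 →ₗ[Λ] M => φ.comp dz) :
    -- then `Y` is `M`-semistable
    Function.Bijective fun φ : Y0 →ₗ[Λ] M => φ.comp dy :=
  -- rows `0 → Hom(Z⁰, M) → Hom(Y⁰, M) → Hom(X⁰, M) → 0` over their degree `-1` analogues
  bijective_of_surjective_of_bijective_of_bijective_of_injective
    (0 : Unit →ₗ[ℤ] _) (lcomp ℤ M g0) (lcomp ℤ M f0) (0 : _ →ₗ[ℤ] Unit)
    (0 : Unit →ₗ[ℤ] _) (lcomp ℤ M gm) (lcomp ℤ M fm) (0 : _ →ₗ[ℤ] Unit)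
    0 (lcomp ℤ M dz) (lcomp ℤ M dy) (lcomp ℤ M dx) 0
    (by simp) (by rw [← lcomp_comp, ← lcomp_comp, hg]) (by rw [← lcomp_comp, ← lcomp_comp, hf])
    (by simp)
    ((exact_zero_iff_injective _ _).mpr (lcomp_injective_of_surjective _ hepi_0))
    (hexact_0.lcomp M hepi_0)
    ((exact_zero_iff_surjective _ _).mpr (hexact_0.surjective_lcomp M hmono_0 hepi_0))
    ((exact_zero_iff_injective _ _).mpr (lcomp_injective_of_surjective _ hepi_m))
    (hexact_m.lcomp M hepi_m)
    ((exact_zero_iff_surjective _ _).mpr (hexact_m.surjective_lcomp M hmono_m hepi_m))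
    (fun _ ↦ ⟨(), rfl⟩) hZ hX (fun _ _ _ ↦ rfl)
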